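/- If random variables U, V, X, Y, Z satisfy the Markov chain U - V - X - (Y,Z), then I(X;U,Z) + I(X;V|U,Y) = I(X;V,Y) - I(X;Y|U) + I(X;Z|U). -/

import Mathlib

open Finset Real

noncomputable def prob {Ω α : Type*} [Fintype Ω] [DecidableEq α]
    (w : Ω → ℝ) (X : Ω → α) (a : α) : ℝ := ∑ ω, if X ω = a then w ω else 0

noncomputable def ent {Ω α : Type*} [Fintype Ω] [Fintype α] [DecidableEq α]
    (w : Ω → ℝ) (X : Ω → α) : ℝ := -∑ a, prob w X a * Real.logb 2 (prob w X a)

noncomputable def condEnt {Ω α β : Type*} [Fintype Ω] [Fintype α] [DecidableEq α]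
    [Fintype β] [DecidableEq β] (w : Ω → ℝ) (X : Ω → α) (Y : Ω → β) : ℝ :=
  ent w (fun ω => (X ω, Y ω)) - ent w Y

noncomputable def mi {Ω α β : Type*} [Fintype Ω] [Fintype α] [DecidableEq α]
    [Fintype β] [DecidableEq β] (w : Ω → ℝ) (X : Ω → α) (Y : Ω → β) : ℝ :=
  ent w X + ent w Y - ent w (fun ω => (X ω, Y ω))

noncomputable def cmi {Ω α β γ : Type*} [Fintype Ω] [Fintype α] [DecidableEq α]
    [Fintype β] [DecidableEq β] [Fintype γ] [DecidableEq γ]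
    (w : Ω → ℝ) (X : Ω → α) (Y : Ω → β) (Z : Ω → γ) : ℝ :=
  condEnt w X Z - condEnt w X (fun ω => (Y ω, Z ω))

def IsPMF {Ω : Type*} [Fintype Ω] (w : Ω → ℝ) : Prop :=
  (∀ ω, 0 ≤ w ω) ∧ ∑ ω, w ω = 1

/-- `A` and `C` are conditionally independent given `B`. -/
def CondIndep {Ω α β γ : Type*} [Fintype Ω] [DecidableEq α] [DecidableEq β] [DecidableEq γ]
    (w : Ω → ℝ) (A : Ω → α) (B : Ω → β) (C : Ω → γ) : Prop :=
  ∀ a b c, prob w (fun ω => (A ω, B ω, C ω)) (a, b, c) * prob w B b =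
    prob w (fun ω => (A ω, B ω)) (a, b) * prob w (fun ω => (B ω, C ω)) (b, c)

/-- Binary entropy function (base 2). -/
noncomputable def binEnt (x : ℝ) : ℝ := -(x * Real.logb 2 x) - (1 - x) * Real.logb 2 (1 - x)

/-!
By the chain rule the identity is equivalent to `I(X; U | V, Y) = 0`, that is, to the entropy
identity `H(X, V, Y, U) + H(V, Y) = H(X, V, Y) + H(V, Y, U)`. The conditional independence of `X`
and `U` given `(V, Y)` comes from `U ⊥ (X, Y, Z) | V` by the semi-graphoid rules (decomposition to
`U ⊥ (Y, X) | V`, weak union to `U ⊥ X | (V, Y)`, symmetry). For any `A ⊥ C | B`, taking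
`log` of `P(a,b,c) P(b) = P(a,b) P(b,c)` on the support and averaging over `P(a,b,c)` gives
`H(A,B,C) + H(B) = H(A,B) + H(B,C)`.
-/

section Prob

variable {Ω α β γ δ : Type*} [Fintype Ω] [DecidableEq α] [DecidableEq β] [DecidableEq γ]
  [DecidableEq δ] (w : Ω → ℝ)

lemma prob_congr {X : Ω → α} {Y : Ω → β} {a : α} {b : β} (h : ∀ ω, X ω = a ↔ Y ω = b) :
    prob w X a = prob w Y b :=
  sum_congr rfl fun ω _ => if_congr (h ω) rfl rfl

lemma prob_nonneg (hw : ∀ ω, 0 ≤ w ω) (X : Ω → α) (a : α) : 0 ≤ prob w X a :=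
  sum_nonneg fun ω _ => by split_ifs <;> simp [hw ω]

lemma prob_le_prob (hw : ∀ ω, 0 ≤ w ω) {X : Ω → α} {Y : Ω → β} {a : α} {b : β}
    (h : ∀ ω, X ω = a → Y ω = b) : prob w X a ≤ prob w Y b :=
  sum_le_sum fun ω _ => by
    by_cases hx : X ω = a
    · simp [hx, h ω hx]
    · simp only [hx, if_false]; split_ifs <;> simp [hw ω]

lemma prob_eq_zero_of_imp (hw : ∀ ω, 0 ≤ w ω) {X : Ω → α} {Y : Ω → β} {a : α} {b : β}
    (h : ∀ ω, X ω = a → Y ω = b) (hb : prob w Y b = 0) : prob w X a = 0 :=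
  le_antisymm (hb ▸ prob_le_prob w hw h) (prob_nonneg w hw X a)

lemma prob_comp [Fintype α] (X : Ω → α) (f : α → β) (b : β) :
    prob w (fun ω => f (X ω)) b = ∑ a with f a = b, prob w X a := by
  unfold prob
  rw [sum_comm]
  refine sum_congr rfl fun ω _ => ?_
  simp

lemma prob_pair_comp_right [Fintype γ] (X : Ω → α) (Z : Ω → γ) (f : γ → δ) (a : α) (d : δ) :
    prob w (fun ω => (X ω, f (Z ω))) (a, d) =
      ∑ c with f c = d, prob w (fun ω => (X ω, Z ω)) (a, c) := by
  unfold prob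
  rw [sum_comm]
  refine sum_congr rfl fun ω _ => ?_
  simp [Prod.mk.injEq, ite_and]

lemma prob_triple_comp_right [Fintype γ] (X : Ω → α) (Y : Ω → β) (Z : Ω → γ) (f : γ → δ)
    (a : α) (b : β) (d : δ) :
    prob w (fun ω => (X ω, Y ω, f (Z ω))) (a, b, d) =
      ∑ c with f c = d, prob w (fun ω => (X ω, Y ω, Z ω)) (a, b, c) := by
  unfold prob
  rw [sum_comm]
  refine sum_congr rfl fun ω _ => ?_
  simp [Prod.mk.injEq, ite_and]

lemma prob_pair_comm (X : Ω → α) (Y : Ω → β) (a : α) (b : β) :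
    prob w (fun ω => (Y ω, X ω)) (b, a) = prob w (fun ω => (X ω, Y ω)) (a, b) :=
  prob_congr w fun ω => by simp only [Prod.mk.injEq]; tauto

end Prob

namespace CondIndep

variable {Ω α β γ δ : Type*} [Fintype Ω] [DecidableEq α] [DecidableEq β] [DecidableEq γ]
  [DecidableEq δ] {w : Ω → ℝ} {A : Ω → α} {B : Ω → β} {C : Ω → γ}

lemma symm (h : CondIndep w A B C) : CondIndep w C B A := by
  intro c b a
  have hCBA : prob w (fun ω => (C ω, B ω, A ω)) (c, b, a) =
      prob w (fun ω => (A ω, B ω, C ω)) (a, b, c) :=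
    prob_congr w fun ω => by simp only [Prod.mk.injEq]; tauto
  rw [hCBA, h, prob_pair_comm w C, prob_pair_comm w A, mul_comm]

lemma comp_right [Fintype γ] (h : CondIndep w A B C) (f : γ → δ) :
    CondIndep w A B (fun ω => f (C ω)) := by
  intro a b d
  rw [prob_triple_comp_right w A B C f, prob_pair_comp_right w B C f, sum_mul, mul_sum]
  exact sum_congr rfl fun c _ => h a b c

lemma weak_union [Fintype γ] [Fintype δ] {D : Ω → δ} (hw : ∀ ω, 0 ≤ w ω)
    (h : CondIndep w A B (fun ω => (C ω, D ω))) :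
    CondIndep w A (fun ω => (B ω, C ω)) D := by
  have hABC : CondIndep w A B C := h.comp_right Prod.fst
  rintro a ⟨b, c⟩ d
  have hABCD : prob w (fun ω => (A ω, (B ω, C ω), D ω)) (a, (b, c), d) =
      prob w (fun ω => (A ω, B ω, C ω, D ω)) (a, b, c, d) :=
    prob_congr w fun ω => by simp only [Prod.mk.injEq, and_assoc]
  have hBCD : prob w (fun ω => ((B ω, C ω), D ω)) ((b, c), d) =
      prob w (fun ω => (B ω, C ω, D ω)) (b, c, d) :=
    prob_congr w fun ω => by simp only [Prod.mk.injEq, and_assoc]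
  rw [hABCD, hBCD]
  rcases eq_or_ne (prob w B b) 0 with hb | hb
  · rw [prob_eq_zero_of_imp w hw (X := fun ω => (A ω, B ω, C ω, D ω)) (by simp +contextual) hb,
      prob_eq_zero_of_imp w hw (X := fun ω => (A ω, B ω, C ω)) (by simp +contextual) hb,
      zero_mul, zero_mul]
  · refine mul_right_cancel₀ hb ?_
    linear_combination prob w (fun ω => (B ω, C ω)) (b, c) * h a b (c, d)
      - prob w (fun ω => (B ω, C ω, D ω)) (b, c, d) * hABC a b c

end CondIndep

section Entropy

variable {Ω α β γ : Type*} [Fintype Ω] [Fintype α] [DecidableEq α] [Fintype β] [DecidableEq β]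
  [Fintype γ] [DecidableEq γ] (w : Ω → ℝ)

lemma sum_prob_comp_mul (X : Ω → α) (f : α → β) (g : β → ℝ) :
    ∑ b, prob w (fun ω => f (X ω)) b * g b = ∑ a, prob w X a * g (f a) := by
  simp_rw [prob_comp, sum_mul]
  rw [← sum_fiberwise univ f fun a => prob w X a * g (f a)]
  refine sum_congr rfl fun b _ => sum_congr rfl fun a ha => ?_
  rw [(mem_filter.mp ha).2]

lemma ent_comp_equiv (X : Ω → α) (e : α ≃ β) : ent w (fun ω => e (X ω)) = ent w X := by
  have hprob (a : α) : prob w (fun ω => e (X ω)) (e a) = prob w X a :=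
    prob_congr w fun ω => e.apply_eq_iff_eq
  unfold ent
  rw [← e.sum_comp]
  simp only [hprob]

lemma ent_comp_eq_neg_sum (X : Ω → α) (f : α → β) :
    ent w (fun ω => f (X ω)) =
      -∑ a, prob w X a * logb 2 (prob w (fun ω => f (X ω)) (f a)) := by
  rw [ent, sum_prob_comp_mul]

lemma ent_add_ent_of_condIndep (hw : ∀ ω, 0 ≤ w ω) {A : Ω → α} {B : Ω → β} {C : Ω → γ}
    (h : CondIndep w A B C) :
    ent w (fun ω => (A ω, B ω, C ω)) + ent w B =
      ent w (fun ω => (A ω, B ω)) + ent w (fun ω => (B ω, C ω)) := by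
  set T : Ω → α × β × γ := fun ω => (A ω, B ω, C ω)
  rw [ent, ent_comp_eq_neg_sum w T (·.2.1), ent_comp_eq_neg_sum w T fun t => (t.1, t.2.1),
    ent_comp_eq_neg_sum w T (·.2), ← neg_add, ← neg_add, neg_inj, ← sum_add_distrib, ← sum_add_distrib]
  refine sum_congr rfl fun ⟨a, b, c⟩ _ => ?_
  rw [← mul_add, ← mul_add]
  rcases (prob_nonneg w hw T (a, b, c)).eq_or_lt with h0 | hpos
  · rw [← h0, zero_mul, zero_mul]
  have hB : 0 < prob w B b := hpos.trans_le (prob_le_prob w hw fun ω hω => by simp_all [T])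
  have hprod := h a b c
  have hAB_BC : prob w (fun ω => (A ω, B ω)) (a, b) * prob w (fun ω => (B ω, C ω)) (b, c) ≠ 0 :=
    hprod ▸ (mul_pos hpos hB).ne'
  rw [← logb_mul hpos.ne' hB.ne', hprod,
    logb_mul (left_ne_zero_of_mul hAB_BC) (right_ne_zero_of_mul hAB_BC)]

end Entropy

theorem leakage_identity_general {Ω 𝒰 𝒱 𝒳 𝒴 𝒵 : Type*} [Fintype Ω]
    [Fintype 𝒰] [DecidableEq 𝒰] [Fintype 𝒱] [DecidableEq 𝒱]
    [Fintype 𝒳] [DecidableEq 𝒳] [Fintype 𝒴] [DecidableEq 𝒴]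
    [Fintype 𝒵] [DecidableEq 𝒵]
    (w : Ω → ℝ) (hw : IsPMF w)
    (U : Ω → 𝒰) (V : Ω → 𝒱) (X : Ω → 𝒳) (Y : Ω → 𝒴) (Z : Ω → 𝒵)
    (hUV : CondIndep w U V (fun ω => (X ω, Y ω, Z ω))) :
    mi w X (fun ω => (U ω, Z ω)) + cmi w X V (fun ω => (U ω, Y ω)) =
      mi w X (fun ω => (V ω, Y ω)) - cmi w X Y U + cmi w X Z U := by
  have hX_U : CondIndep w X (fun ω => (V ω, Y ω)) U :=
    ((hUV.comp_right fun p => (p.2.1, p.1)).weak_union hw.1).symm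
  have hent := ent_add_ent_of_condIndep w hw.1 hX_U
  have hZU : ent w (fun ω => (Z ω, U ω)) = ent w (fun ω => (U ω, Z ω)) :=
    ent_comp_equiv w (fun ω => (U ω, Z ω)) (Equiv.prodComm 𝒰 𝒵)
  have hYU : ent w (fun ω => (Y ω, U ω)) = ent w (fun ω => (U ω, Y ω)) :=
    ent_comp_equiv w (fun ω => (U ω, Y ω)) (Equiv.prodComm 𝒰 𝒴)
  have hXZU : ent w (fun ω => (X ω, Z ω, U ω)) = ent w (fun ω => (X ω, U ω, Z ω)) :=
    ent_comp_equiv w (fun ω => (X ω, U ω, Z ω)) ((Equiv.refl 𝒳).prodCongr (Equiv.prodComm 𝒰 𝒵))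
  have hXYU : ent w (fun ω => (X ω, Y ω, U ω)) = ent w (fun ω => (X ω, U ω, Y ω)) :=
    ent_comp_equiv w (fun ω => (X ω, U ω, Y ω)) ((Equiv.refl 𝒳).prodCongr (Equiv.prodComm 𝒰 𝒴))
  let σ : (𝒱 × 𝒴) × 𝒰 ≃ 𝒱 × 𝒰 × 𝒴 :=
    (Equiv.prodAssoc 𝒱 𝒴 𝒰).trans ((Equiv.refl 𝒱).prodCongr (Equiv.prodComm 𝒴 𝒰))
  have hVYU : ent w (fun ω => ((V ω, Y ω), U ω)) = ent w (fun ω => (V ω, U ω, Y ω)) :=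
    ent_comp_equiv w (fun ω => (V ω, U ω, Y ω)) σ.symm
  have hXVYU : ent w (fun ω => (X ω, (V ω, Y ω), U ω)) = ent w (fun ω => (X ω, V ω, U ω, Y ω)) :=
    ent_comp_equiv w (fun ω => (X ω, V ω, U ω, Y ω)) ((Equiv.refl 𝒳).prodCongr σ.symm)
  simp only [mi, cmi, condEnt]
  linarith

/-- under the Markov chain U - V - X - (Y,Z),
`I(X;U,Z) + I(X;V|U,Y) = I(X;V,Y) - I(X;Y|U) + I(X;Z|U)`. -/
theorem leakage_identity {Ω 𝒰 𝒱 𝒳 𝒴 𝒵 : Type*} [Fintype Ω]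
    [Fintype 𝒰] [DecidableEq 𝒰] [Fintype 𝒱] [DecidableEq 𝒱]
    [Fintype 𝒳] [DecidableEq 𝒳] [Fintype 𝒴] [DecidableEq 𝒴]
    [Fintype 𝒵] [DecidableEq 𝒵]
    (w : Ω → ℝ) (hw : IsPMF w)
    (U : Ω → 𝒰) (V : Ω → 𝒱) (X : Ω → 𝒳) (Y : Ω → 𝒴) (Z : Ω → 𝒵)
    (hUV : CondIndep w U V (fun ω => (X ω, Y ω, Z ω)))
    (hXYZ : CondIndep w (fun ω => (U ω, V ω)) X (fun ω => (Y ω, Z ω))) :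
    mi w X (fun ω => (U ω, Z ω)) + cmi w X V (fun ω => (U ω, Y ω)) =
      mi w X (fun ω => (V ω, Y ω)) - cmi w X Y U + cmi w X Z U :=
  leakage_identity_general w hw U V X Y Z hUV
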